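/- arXiv:math/0009204 — 3 statements merged into one kernel-verified Lean document; each statement's English description precedes it below -/
import Mathlib

section
/- Let (a_k)_{k≥0} be a nondecreasing sequence in [0,1]. For all integers s ≤ t, and every integer m ≥ 1, ℙ(s − τ[s,t] ≥ m) ≤ ∑_{i=0}^{t−s} ρ_{m+i}, where s − τ[s,t] := +∞ on the event {τ[s,t] = −∞}. The same bound holds for t = +∞ with the series ∑_{i≥0} ρ_{m+i} on the right-hand side. -/
/-!
If the chain started at `s - m` does not vanish at any of the times `s, …, t`, then its last zero
before `t` lies strictly before `s`, and every step since that zero was a success; the time right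
after that zero is therefore a regeneration time in `(s - m, s]`. Hence
`{τ[s,t] ≤ s - m} ⊆ ⋃_{i ≤ t - s} {W^{s-m}_{s+i} = 0}`, and since the i.i.d. law is invariant under
shifts, the `i`-th event has probability `ρ_{m+i}`. A union bound concludes, and the case
`t = ∞` is the same argument.
-/

open MeasureTheory Filter

/-- House-of-cards chain: `hoc a u m k` is `W^m_{m+k}`. -/
noncomputable def hoc (a : ℕ → ℝ) (u : ℤ → ℝ) (m : ℤ) : ℕ → ℕ
  | 0 => 0
  | k + 1 => if u (m + k + 1) < a (hoc a u m k) then hoc a u m k + 1 else 0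

/-- Regeneration time `τ[s,t]`. -/
noncomputable def tau (a : ℕ → ℝ) (u : ℤ → ℝ) (s t : ℤ) : WithBot ℤ :=
  sSup {x : WithBot ℤ | ∃ m : ℤ, x = (m : WithBot ℤ) ∧ m ≤ s ∧
    ∀ j : ℤ, m ≤ j → j ≤ t → u j < a (j - m).toNat}

/-- Regeneration time `τ[s,∞]`. -/
noncomputable def tauInf (a : ℕ → ℝ) (u : ℤ → ℝ) (s : ℤ) : WithBot ℤ :=
  sSup {x : WithBot ℤ | ∃ m : ℤ, x = (m : WithBot ℤ) ∧ m ≤ s ∧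
    ∀ j : ℤ, m ≤ j → u j < a (j - m).toNat}

/-- Return probability `ρ_k := ℙ(W^0_k = 0)`; note `ρ_0 = 1` automatically. -/
noncomputable def rho (a : ℕ → ℝ) (μ : Measure (ℤ → ℝ)) (k : ℕ) : ENNReal :=
  μ {u | hoc a u 0 k = 0}

/-- The coordinates are i.i.d. uniform on `[0,1)` under `μ`. -/
def IsIIDUniform (μ : Measure (ℤ → ℝ)) : Prop :=
  ProbabilityTheory.iIndepFun (m := fun _ : ℤ => (inferInstance : MeasurableSpace ℝ))
    (fun i (u : ℤ → ℝ) => u i) μ ∧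
  ∀ i : ℤ, μ.map (fun u => u i) = volume.restrict (Set.Ico (0:ℝ) 1)

open ProbabilityTheory

theorem map_comp_equiv_eq_self_of_iIndepFun {ι X : Type*} [MeasurableSpace X]
    {μ : Measure (ι → X)} (hind : iIndepFun (fun i u => u i) μ) (e : ι ≃ ι)
    (hident : ∀ i, μ.map (fun u => u (e i)) = μ.map (fun u => u i)) :
    μ.map (fun u => u ∘ e) = μ := by
  have := hind.isProbabilityMeasure
  have (i : ι) : IsProbabilityMeasure (μ.map fun u => u i) :=
    Measure.isProbabilityMeasure_map (measurable_pi_apply i).aemeasurable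
  have hprod : μ = Measure.infinitePi (fun i => μ.map (fun u => u i)) := by
    simpa using hind.map_fun_eq_infinitePi_map (fun i => measurable_pi_apply i)
  have key := Measure.infinitePi_map_piCongrLeft (fun i => μ.map (fun u => u i)) e.symm
  simp only [← hident (e.symm _), Equiv.apply_symm_apply, ← hprod] at key
  convert key using 2
  ext u i
  simp [MeasurableEquiv.coe_piCongrLeft, Equiv.piCongrLeft_apply]

section HouseOfCards

variable (a : ℕ → ℝ) (u : ℤ → ℝ) (b : ℤ)

lemma hoc_succ (k : ℕ) :
    hoc a u b (k + 1) = if u (b + k + 1) < a (hoc a u b k) then hoc a u b k + 1 else 0 :=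
  rfl

lemma hoc_le (k : ℕ) : hoc a u b k ≤ k := by
  induction k with
  | zero => rfl
  | succ k ih => rw [hoc_succ]; split_ifs <;> omega

/-- Every step since the last zero `b + k - c` of the chain (where `c = W^b_{b+k}`) was a
success, so `b + k - c + 1` is a regeneration time for the window ending at `b + k`. -/
lemma success_after_last_zero (k : ℕ) (j : ℤ) (hj : b + k - hoc a u b k + 1 ≤ j)
    (hjk : j ≤ b + k) :
    u j < a (j - (b + k - hoc a u b k + 1)).toNat := by
  induction k generalizing j with
  | zero => simp only [hoc, Nat.cast_zero] at hj hjk; omega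
  | succ k ih =>
    rw [hoc_succ] at hj ⊢
    split_ifs at hj ⊢ with h
    · push_cast at hj hjk ⊢
      rcases lt_or_eq_of_le hjk with hjk | rfl
      · convert ih j (by omega) (by omega) using 3
        omega
      · rw [← add_assoc]
        convert h using 3
        omega
    · push_cast at hj hjk; omega

lemma hoc_add_of_ne_zero (m N : ℕ) (hne : ∀ i ≤ N, hoc a u b (m + i) ≠ 0) :
    hoc a u b (m + N) = hoc a u b m + N := by
  induction N with
  | zero => rfl
  | succ N ih =>
    have hN := hne (N + 1) le_rfl
    rw [← add_assoc, hoc_succ] at hN ⊢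
    split_ifs at hN ⊢
    · rw [ih fun i hi => hne i (by omega)]; rfl
    · exact absurd rfl hN

lemma success_after_last_zero_of_ne_zero (m N : ℕ) (hne : ∀ i ≤ N, hoc a u b (m + i) ≠ 0) (j : ℤ)
    (hj : b + m - hoc a u b m + 1 ≤ j) (hjN : j ≤ b + (m + N)) :
    u j < a (j - (b + m - hoc a u b m + 1)).toNat := by
  have hstart : b + (m + N : ℕ) - (hoc a u b (m + N) : ℤ) + 1 = b + m - hoc a u b m + 1 := by
    rw [hoc_add_of_ne_zero a u b m N hne]; push_cast; ring
  rw [← hstart] at hj ⊢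
  exact success_after_last_zero a u b (m + N) j hj (by push_cast; omega)

lemma hoc_comp_addLeft (k : ℕ) : hoc a (u ∘ Equiv.addLeft b) 0 k = hoc a u b k := by
  induction k with
  | zero => rfl
  | succ k ih =>
    rw [hoc_succ, hoc_succ, ih]
    simp only [Function.comp_apply, Equiv.coe_addLeft, zero_add, add_assoc]

lemma measurable_hoc (k : ℕ) : Measurable fun u => hoc a u b k := by
  induction k with
  | zero => exact measurable_const
  | succ k ih =>
    simp only [hoc_succ]
    exact Measurable.ite (measurableSet_lt (measurable_pi_apply _) (measurable_from_top.comp ih))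
      (measurable_from_top.comp ih) measurable_const

end HouseOfCards

section Regeneration

variable {a : ℕ → ℝ} {u : ℤ → ℝ} {s : ℤ}

lemma coe_le_tau {t p : ℤ} (hps : p ≤ s) (hp : ∀ j, p ≤ j → j ≤ t → u j < a (j - p).toNat) :
    (p : WithBot ℤ) ≤ tau a u s t :=
  le_csSup ⟨s, by rintro _ ⟨q, rfl, hqs, -⟩; exact_mod_cast hqs⟩ ⟨p, rfl, hps, hp⟩

lemma coe_le_tauInf {p : ℤ} (hps : p ≤ s) (hp : ∀ j, p ≤ j → u j < a (j - p).toNat) :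
    (p : WithBot ℤ) ≤ tauInf a u s :=
  le_csSup ⟨s, by rintro _ ⟨q, rfl, hqs, -⟩; exact_mod_cast hqs⟩ ⟨p, rfl, hps, hp⟩

lemma exists_hoc_eq_zero_of_tau_le {t : ℤ} {m : ℕ}
    (hτ : tau a u s t ≤ ((s - m : ℤ) : WithBot ℤ)) :
    ∃ i ≤ (t - s).toNat, hoc a u (s - m) (m + i) = 0 := by
  by_contra! hne
  have hpos : hoc a u (s - m) m ≠ 0 := hne 0 (Nat.zero_le _)
  have hle := hoc_le a u (s - m) m
  have hregen : ((s - m + m - hoc a u (s - m) m + 1 : ℤ) : WithBot ℤ) ≤ tau a u s t :=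
    coe_le_tau (by omega) fun j hj hjt =>
      success_after_last_zero_of_ne_zero a u _ m _ hne j hj (by omega)
  have := hregen.trans hτ
  rw [WithBot.coe_le_coe] at this
  omega

lemma exists_hoc_eq_zero_of_tauInf_le {m : ℕ} (hτ : tauInf a u s ≤ ((s - m : ℤ) : WithBot ℤ)) :
    ∃ i, hoc a u (s - m) (m + i) = 0 := by
  by_contra! hne
  have hpos : hoc a u (s - m) m ≠ 0 := hne 0
  have hle := hoc_le a u (s - m) m
  have hregen : ((s - m + m - hoc a u (s - m) m + 1 : ℤ) : WithBot ℤ) ≤ tauInf a u s :=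
    coe_le_tauInf (by omega) fun j hj =>
      success_after_last_zero_of_ne_zero a u _ m (j - s).toNat (fun i _ => hne i) j hj (by omega)
  have := hregen.trans hτ
  rw [WithBot.coe_le_coe] at this
  omega

end Regeneration

lemma measure_setOf_hoc_eq_zero (a : ℕ → ℝ) {μ : Measure (ℤ → ℝ)}
    (hind : iIndepFun (fun i u => u i) μ)
    (hident : ∀ i j, μ.map (fun u => u i) = μ.map (fun u => u j)) (b : ℤ) (k : ℕ) :
    μ {u | hoc a u b k = 0} = rho a μ k := by
  have hshift := map_comp_equiv_eq_self_of_iIndepFun hind (Equiv.addLeft b) fun i => hident _ _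
  have hmeas : MeasurableSet {u : ℤ → ℝ | hoc a u 0 k = 0} :=
    measurable_hoc a 0 k (measurableSet_singleton 0)
  calc μ {u | hoc a u b k = 0}
      = μ ((fun u => u ∘ Equiv.addLeft b) ⁻¹' {u | hoc a u 0 k = 0}) := by
        simp only [Set.preimage_ofPred_eq, hoc_comp_addLeft]
    _ = rho a μ k := by
        rw [← Measure.map_apply (by fun_prop) hmeas, hshift, rho]

theorem stmt2_general (a : ℕ → ℝ) (μ : Measure (ℤ → ℝ)) (hiid : IsIIDUniform μ) (s t : ℤ) (m : ℕ) :
    μ {u | tau a u s t ≤ ((s - m : ℤ) : WithBot ℤ)} ≤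
        ∑ i ∈ Finset.range ((t - s).toNat + 1), rho a μ (m + i) ∧
      μ {u | tauInf a u s ≤ ((s - m : ℤ) : WithBot ℤ)} ≤ ∑' i : ℕ, rho a μ (m + i) := by
  obtain ⟨hind, hunif⟩ := hiid
  have hρ (i : ℕ) : μ {u | hoc a u (s - m) (m + i) = 0} = rho a μ (m + i) :=
    measure_setOf_hoc_eq_zero a hind (fun i j => (hunif i).trans (hunif j).symm) _ _
  constructor
  · calc μ {u | tau a u s t ≤ ((s - m : ℤ) : WithBot ℤ)}
        ≤ μ (⋃ i ∈ Finset.range ((t - s).toNat + 1), {u | hoc a u (s - m) (m + i) = 0}) :=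
          measure_mono fun u hu => by
            obtain ⟨i, hi, h0⟩ := exists_hoc_eq_zero_of_tau_le hu
            exact Set.mem_biUnion (Finset.mem_range.2 (by omega)) h0
      _ ≤ ∑ i ∈ Finset.range ((t - s).toNat + 1), μ {u | hoc a u (s - m) (m + i) = 0} :=
          measure_biUnion_finset_le _ _
      _ = _ := Finset.sum_congr rfl fun i _ => hρ i
  · calc μ {u | tauInf a u s ≤ ((s - m : ℤ) : WithBot ℤ)}
        ≤ μ (⋃ i, {u | hoc a u (s - m) (m + i) = 0}) :=
          measure_mono fun u hu => Set.mem_iUnion.2 (exists_hoc_eq_zero_of_tauInf_le hu)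
      _ ≤ ∑' i, μ {u | hoc a u (s - m) (m + i) = 0} := measure_iUnion_le _
      _ = _ := tsum_congr hρ

/-- `ℙ(s - τ[s,t] ≥ m) ≤ ∑_{i=0}^{t-s} ρ_{m+i}` for `m ≥ 1`
(the event `s - τ[s,t] ≥ m` is `τ[s,t] ≤ s - m`, which includes `τ[s,t] = -∞`),
and the same bound for `t = ∞` with the full series on the right. -/
theorem stmt2 (a : ℕ → ℝ) (ha : ∀ k, a k ∈ Set.Icc (0:ℝ) 1) (hmono : Monotone a)
    (μ : Measure (ℤ → ℝ)) [IsProbabilityMeasure μ] (hiid : IsIIDUniform μ)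
    (s t : ℤ) (hst : s ≤ t) (m : ℕ) (hm : 1 ≤ m) :
    μ {u | tau a u s t ≤ ((s - m : ℤ) : WithBot ℤ)} ≤
        ∑ i ∈ Finset.range ((t - s).toNat + 1), rho a μ (m + i) ∧
      μ {u | tauInf a u s ≤ ((s - m : ℤ) : WithBot ℤ)} ≤ ∑' i : ℕ, rho a μ (m + i) :=
  stmt2_general a μ hiid s t m
end

section
/- Let (a_k)_{k≥0} be a nondecreasing sequence in [0,1] with β := ∏_{k=0}^{∞} a_k > 0, and define N(j) := 1{τ[j,∞] = j} for j ∈ ℤ. Then ℙ(N(j) = 1) = β for every j ∈ ℤ, and for every n ≥ 1 and all integers s_1 < s_2 < … < s_n: ℙ(N(s_ℓ) = 1 for ℓ = 1, …, n) = β · ∏_{ℓ=1}^{n−1} (∏_{k=0}^{s_{ℓ+1} − s_ℓ − 1} a_k). In other words, the point process N of renewal times is a stationary renewal process. -/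
open MeasureTheory Filter

/-!
Because `a` is nondecreasing, `τ[s_l,∞] = s_l` for all `l` exactly when every `U_i` with
`i ≥ s_1` lies below `a_{i - s_L}`, where `s_L` is the last of the `s_l` not exceeding `i`:
the most recent renewal imposes the strongest constraint. This is a decreasing intersection of
independent coordinate events, so its probability is the limit of the products of these
thresholds, which split into one factor `∏_{k < s_{l+1} - s_l} a_k` per gap and a tail
`∏_{k < m} a_k → β`.
-/

theorem tauInf_eq_self_iff (a : ℕ → ℝ) (u : ℤ → ℝ) (s : ℤ) :
    tauInf a u s = s ↔ ∀ j, s ≤ j → u j < a (j - s).toNat := by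
  set S := {x : WithBot ℤ | ∃ m : ℤ, x = m ∧ m ≤ s ∧ ∀ j, m ≤ j → u j < a (j - m).toNat}
  change sSup S = s ↔ _
  constructor
  · intro h
    have hne : S.Nonempty := by
      by_contra hemp
      simp [Set.not_nonempty_iff_eq_empty.1 hemp] at h
    obtain ⟨_, ⟨m, rfl, hms, hm⟩, hlt⟩ := exists_lt_of_lt_csSup hne
      (show ((s - 1 : ℤ) : WithBot ℤ) < sSup S from h ▸ WithBot.coe_lt_coe.2 (by omega))
    obtain rfl : m = s := by have := WithBot.coe_lt_coe.1 hlt; omega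
    exact hm
  · intro h
    refine IsGreatest.csSup_eq ⟨⟨s, rfl, le_rfl, h⟩, ?_⟩
    rintro _ ⟨m, rfl, hms, -⟩
    exact WithBot.coe_le_coe.2 hms

namespace IsIIDUniform

variable {μ : Measure (ℤ → ℝ)}

theorem measure_coord_lt (hμ : IsIIDUniform μ) (i : ℤ) {x : ℝ} (hx : x ≤ 1) :
    μ {u | u i < x} = ENNReal.ofReal x := by
  change μ ((fun u => u i) ⁻¹' Set.Iio x) = _
  rw [← Measure.map_apply (measurable_pi_apply i) measurableSet_Iio, hμ.2 i,
    Measure.restrict_apply measurableSet_Iio, Set.inter_comm,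
    Set.Ico_inter_Iio, min_eq_right hx, Real.volume_Ico, sub_zero]

theorem measure_forall_mem_lt (hμ : IsIIDUniform μ) (F : Finset ℤ) {c : ℤ → ℝ}
    (hc : ∀ i ∈ F, c i ≤ 1) :
    μ {u | ∀ i ∈ F, u i < c i} = ∏ i ∈ F, ENNReal.ofReal (c i) := by
  have hset : {u : ℤ → ℝ | ∀ i ∈ F, u i < c i} = ⋂ i ∈ F, (fun u => u i) ⁻¹' Set.Iio (c i) := by
    ext u; simp
  rw [hset, hμ.1.measure_inter_preimage_eq_mul F fun i _ => measurableSet_Iio]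
  exact Finset.prod_congr rfl fun i hi => hμ.measure_coord_lt i (hc i hi)

theorem measure_forall_ge_lt (hμ : IsIIDUniform μ) [IsFiniteMeasure μ] (b : ℤ) {c : ℤ → ℝ}
    (hc : ∀ i, c i ∈ Set.Icc (0 : ℝ) 1) {L : ℝ}
    (hL : Tendsto (fun m : ℕ => ∏ i ∈ Finset.Ico b (b + m), c i) atTop (nhds L)) :
    μ {u | ∀ i, b ≤ i → u i < c i} = ENNReal.ofReal L := by
  set E : ℕ → Set (ℤ → ℝ) := fun m => {u | ∀ i ∈ Finset.Ico b (b + m), u i < c i}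
  have hE : ∀ m, μ (E m) = ENNReal.ofReal (∏ i ∈ Finset.Ico b (b + m), c i) := fun m => by
    rw [hμ.measure_forall_mem_lt _ fun i _ => (hc i).2,
      ENNReal.ofReal_prod_of_nonneg fun i _ => (hc i).1]
  have hmeas : ∀ m, NullMeasurableSet (E m) μ := fun m => by
    simp only [E, Set.ofPred_forall]
    exact (Finset.measurableSet_biInter _ fun i _ =>
      measurableSet_lt (measurable_pi_apply i) measurable_const).nullMeasurableSet
  have hanti : Antitone E := fun m m' hmm' u hu i hi =>
    hu i (Finset.Ico_subset_Ico_right (by omega) hi)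
  have hinter : ⋂ m, E m = {u | ∀ i, b ≤ i → u i < c i} := by
    ext u
    simp only [E, Set.mem_iInter, Set.mem_ofPred_eq, Finset.mem_Ico]
    refine ⟨fun h i hi => h ((i - b).toNat + 1) i ⟨hi, by omega⟩, fun h m i hi => h i hi.1⟩
  have hlim := tendsto_measure_iInter_atTop hmeas hanti ⟨0, measure_ne_top μ _⟩
  rw [hinter] at hlim
  refine tendsto_nhds_unique hlim ?_
  simp only [Function.comp_def, hE]
  exact (ENNReal.continuous_ofReal.tendsto L).comp hL

end IsIIDUniform

theorem prod_Ico_mul_prod_Ico {α M : Type*} [LinearOrder α] [LocallyFiniteOrder α] [CommMonoid M]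
    (f : α → M) {x y z : α} (hxy : x ≤ y) (hyz : y ≤ z) :
    (∏ i ∈ Finset.Ico x y, f i) * ∏ i ∈ Finset.Ico y z, f i = ∏ i ∈ Finset.Ico x z, f i := by
  rw [← Finset.prod_union (Finset.Ico_disjoint_Ico_consecutive x y z),
    Finset.Ico_union_Ico_eq_Ico hxy hyz]

theorem prod_Ico_eq_prod_blocks {α M : Type*} [LinearOrder α] [LocallyFiniteOrder α]
    [CommMonoid M] (f : α → M) {s : ℕ → α} (hs : Monotone s) (N : ℕ) :
    ∏ i ∈ Finset.Ico (s 0) (s N), f i =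
      ∏ l ∈ Finset.range N, ∏ i ∈ Finset.Ico (s l) (s (l + 1)), f i := by
  induction N with
  | zero => simp
  | succ N ih =>
    rw [Finset.prod_range_succ, ← ih, prod_Ico_mul_prod_Ico f (hs N.zero_le) (hs N.le_succ)]

theorem prod_Ico_sub_toNat {M : Type*} [CommMonoid M] (f : ℕ → M) (b e : ℤ) :
    ∏ i ∈ Finset.Ico b e, f (i - b).toNat = ∏ k ∈ Finset.range (e - b).toNat, f k := by
  refine Finset.prod_nbij' (fun i => (i - b).toNat) (fun k => b + k) ?_ ?_ ?_ ?_ fun _ _ => rfl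
  all_goals intro x hx
  all_goals simp only [Finset.mem_Ico, Finset.mem_range] at hx ⊢
  all_goals omega

def lastIndexLE (s : ℕ → ℤ) (N : ℕ) (i : ℤ) : ℕ := Nat.findGreatest (fun l => s l ≤ i) N

theorem lastIndexLE_eq {s : ℕ → ℤ} (hs : Monotone s) {N l : ℕ} {i : ℤ} (hlN : l ≤ N)
    (hli : s l ≤ i) (hil : l < N → i < s (l + 1)) : lastIndexLE s N i = l := by
  refine Nat.findGreatest_eq_iff.2 ⟨hlN, fun _ => hli, fun l' hll' hl'N => ?_⟩
  exact not_le.2 ((hil (by omega)).trans_le (hs hll'))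

def renewalThreshold (a : ℕ → ℝ) (s : ℕ → ℤ) (N : ℕ) (i : ℤ) : ℝ :=
  a (i - s (lastIndexLE s N i)).toNat

theorem setOf_forall_tauInf_eq {a : ℕ → ℝ} (ha : Monotone a) {s : ℕ → ℤ} (hs : Monotone s)
    (N : ℕ) :
    {u : ℤ → ℝ | ∀ l ≤ N, tauInf a u (s l) = s l} =
      {u | ∀ i, s 0 ≤ i → u i < renewalThreshold a s N i} := by
  ext u
  simp only [tauInf_eq_self_iff, Set.mem_ofPred_eq, renewalThreshold, lastIndexLE]
  constructor
  · intro h i hi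
    exact h _ (Nat.findGreatest_le N) i (Nat.findGreatest_spec (P := (s · ≤ i)) N.zero_le hi)
  · intro h l hl j hj
    have hlast := hs (Nat.le_findGreatest (P := (s · ≤ j)) hl hj)
    exact (h j ((hs l.zero_le).trans hj)).trans_le (ha (by omega))

theorem prod_Ico_renewalThreshold (a : ℕ → ℝ) {s : ℕ → ℤ} (hs : Monotone s) (N : ℕ) {e : ℤ}
    (he : s N ≤ e) :
    ∏ i ∈ Finset.Ico (s 0) e, renewalThreshold a s N i =
      (∏ l ∈ Finset.range N, ∏ k ∈ Finset.range (s (l + 1) - s l).toNat, a k) *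
        ∏ k ∈ Finset.range (e - s N).toNat, a k := by
  rw [← prod_Ico_mul_prod_Ico _ (hs N.zero_le) he, prod_Ico_eq_prod_blocks _ hs]
  congr 1
  · refine Finset.prod_congr rfl fun l hl => ?_
    rw [← prod_Ico_sub_toNat]
    refine Finset.prod_congr rfl fun i hi => ?_
    rw [Finset.mem_Ico] at hi
    rw [renewalThreshold, lastIndexLE_eq hs (Finset.mem_range.1 hl).le hi.1 fun _ => hi.2]
  · rw [← prod_Ico_sub_toNat]
    refine Finset.prod_congr rfl fun i hi => ?_
    rw [renewalThreshold,
      lastIndexLE_eq hs le_rfl (Finset.mem_Ico.1 hi).1 fun h => absurd h (lt_irrefl N)]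

theorem tendsto_prod_range_iInf {a : ℕ → ℝ} (ha : ∀ k, a k ∈ Set.Icc (0 : ℝ) 1) :
    Tendsto (fun M => ∏ k ∈ Finset.range M, a k) atTop
      (nhds (⨅ M, ∏ k ∈ Finset.range M, a k)) := by
  have hnonneg : ∀ M, 0 ≤ ∏ k ∈ Finset.range M, a k := fun M =>
    Finset.prod_nonneg fun k _ => (ha k).1
  refine tendsto_atTop_ciInf (antitone_nat_of_succ_le fun M => ?_) ⟨0, ?_⟩
  · rw [Finset.prod_range_succ]
    exact mul_le_of_le_one_right (hnonneg M) (ha M).2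
  · rintro _ ⟨M, rfl⟩
    exact hnonneg M

theorem measure_forall_tauInf_eq {a : ℕ → ℝ} (ha : ∀ k, a k ∈ Set.Icc (0 : ℝ) 1)
    (hmono : Monotone a) {μ : Measure (ℤ → ℝ)} [IsFiniteMeasure μ] (hμ : IsIIDUniform μ)
    {s : ℕ → ℤ} (hs : Monotone s) (N : ℕ) :
    μ {u | ∀ l ≤ N, tauInf a u (s l) = s l} =
      ENNReal.ofReal ((⨅ M, ∏ k ∈ Finset.range M, a k) *
        ∏ l ∈ Finset.range N, ∏ k ∈ Finset.range (s (l + 1) - s l).toNat, a k) := by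
  rw [setOf_forall_tauInf_eq hmono hs,
    hμ.measure_forall_ge_lt (c := renewalThreshold a s N) (s 0) fun i => ha _, mul_comm]
  set T := (s N - s 0).toNat
  have h0N : s 0 ≤ s N := hs N.zero_le
  have hprod : ∀ m ≥ T, ∏ i ∈ Finset.Ico (s 0) (s 0 + m), renewalThreshold a s N i =
      (∏ l ∈ Finset.range N, ∏ k ∈ Finset.range (s (l + 1) - s l).toNat, a k) *
        ∏ k ∈ Finset.range (m - T), a k := fun m hm => by
    rw [prod_Ico_renewalThreshold a hs N (by omega), show (s 0 + m - s N).toNat = m - T by omega]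
  refine Tendsto.congr' (eventually_atTop.2 ⟨T, fun m hm => (hprod m hm).symm⟩) ?_
  exact ((tendsto_prod_range_iInf ha).comp (tendsto_sub_atTop_nat T)).const_mul _

theorem stmt14_general (a : ℕ → ℝ) (ha : ∀ k, a k ∈ Set.Icc (0:ℝ) 1) (hmono : Monotone a)
    (μ : Measure (ℤ → ℝ)) [IsProbabilityMeasure μ] (hiid : IsIIDUniform μ) :
    (∀ j : ℤ, μ {u | tauInf a u j = (j : WithBot ℤ)} =
        ENNReal.ofReal (⨅ N : ℕ, ∏ k ∈ Finset.range N, a k)) ∧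
      ∀ n : ℕ, 1 ≤ n → ∀ s : ℕ → ℤ, StrictMono s →
        μ {u | ∀ l : ℕ, l < n → tauInf a u (s l) = (s l : WithBot ℤ)} =
          ENNReal.ofReal ((⨅ N : ℕ, ∏ k ∈ Finset.range N, a k) *
            ∏ l ∈ Finset.range (n - 1),
              ∏ k ∈ Finset.range (s (l + 1) - s l).toNat, a k) := by
  constructor
  · intro j
    simpa using measure_forall_tauInf_eq ha hmono hiid (monotone_const (c := j)) 0
  · intro n hn s hs
    obtain ⟨N, rfl⟩ := Nat.exists_eq_add_of_le' hn
    simpa [Nat.lt_succ_iff] using measure_forall_tauInf_eq ha hmono hiid hs.monotone N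

/-- renewal process: with `β := ∏_{k=0}^∞ a_k > 0` (the infimum of
the nonincreasing partial products) and `N(j) := 1{τ[j,∞] = j}`, one has
`ℙ(N(j) = 1) = β` for all `j`, and for all `s_1 < … < s_n`,
`ℙ(N(s_ℓ) = 1, ℓ = 1,…,n) = β ∏_{ℓ=1}^{n-1} ∏_{k=0}^{s_{ℓ+1}-s_ℓ-1} a_k`. -/
theorem stmt14 (a : ℕ → ℝ) (ha : ∀ k, a k ∈ Set.Icc (0:ℝ) 1) (hmono : Monotone a)
    (hβ : 0 < ⨅ N : ℕ, ∏ k ∈ Finset.range N, a k)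
    (μ : Measure (ℤ → ℝ)) [IsProbabilityMeasure μ] (hiid : IsIIDUniform μ) :
    (∀ j : ℤ, μ {u | tauInf a u j = (j : WithBot ℤ)} =
        ENNReal.ofReal (⨅ N : ℕ, ∏ k ∈ Finset.range N, a k)) ∧
      ∀ n : ℕ, 1 ≤ n → ∀ s : ℕ → ℤ, StrictMono s →
        μ {u | ∀ l : ℕ, l < n → tauInf a u (s l) = (s l : WithBot ℤ)} =
          ENNReal.ofReal ((⨅ N : ℕ, ∏ k ∈ Finset.range N, a k) *
            ∏ l ∈ Finset.range (n - 1),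
              ∏ k ∈ Finset.range (s (l + 1) - s l).toNat, a k) :=
  stmt14_general a ha hmono μ hiid
end

section
/- In the binary autoregression setup, assume additionally that C⁻ > 0. Then the following are equivalent: (i) β := ∏_{k=0}^{∞} a_k > 0; (ii) ∑_{k≥0} r_k < ∞; (iii) ∑_{k≥1} k |θ_k| < ∞. -/
/-! By the mean value theorem on `I`, the slopes of `q` there lie in `[C⁻, C⁺]`, so
`2 C⁻ r_k ≤ 1 - a_k ≤ 2 C⁺ r_k`, while `1 - a_k ≤ q(θ₀ + r₀) - q(θ₀ - r₀) < 1` keeps every `a_k`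
positive. A product of factors in `(0, 1]` has a positive limit iff `∑ (1 - a_k) < ∞` (compare with
`∑ -log a_k`), which gives (i) ⇔ (ii). For (ii) ⇔ (iii), `∑_k r_k = ∑_k ∑_m |θ_{k+m+1}|` is a double
series of nonnegative terms; summed along the antidiagonals `k + m = n` it counts `|θ_{n+1}|`
exactly `n + 1` times. -/

open MeasureTheory Filter

/-- `r_k := ∑_{m>k} |θ_m|`. -/
noncomputable def rTail (θ : ℕ → ℝ) (k : ℕ) : ℝ := ∑' m : ℕ, |θ (k + m + 1)|

/-- The coefficients `a_k` of the binary autoregression: for `k ≥ 1`,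
`a_k = 1 - sup_w (q(θ_0 + ∑_{m=1}^k θ_m w_m + r_k) - q(θ_0 + ∑_{m=1}^k θ_m w_m - r_k))`,
the supremum running over `w ∈ {-1,+1}^k`; for `k = 0` this reads
`a_0 = 1 - (q(θ_0 + r_0) - q(θ_0 - r_0))`. -/
noncomputable def aBin (θ : ℕ → ℝ) (q : ℝ → ℝ) (k : ℕ) : ℝ :=
  1 - sSup {d : ℝ | ∃ w : Fin k → ℝ, (∀ i, w i = 1 ∨ w i = -1) ∧
    d = q (θ 0 + (∑ m : Fin k, θ (m.1 + 1) * w m) + rTail θ k)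
      - q (θ 0 + (∑ m : Fin k, θ (m.1 + 1) * w m) - rTail θ k)}

/-- `C⁺ := max q′` on `[θ_0 - r_0, θ_0 + r_0]`. -/
noncomputable def Cplus (θ : ℕ → ℝ) (q : ℝ → ℝ) : ℝ :=
  sSup (deriv q '' Set.Icc (θ 0 - rTail θ 0) (θ 0 + rTail θ 0))

/-- `C⁻ := min q′` on `[θ_0 - r_0, θ_0 + r_0]`. -/
noncomputable def Cminus (θ : ℕ → ℝ) (q : ℝ → ℝ) : ℝ :=
  sInf (deriv q '' Set.Icc (θ 0 - rTail θ 0) (θ 0 + rTail θ 0))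

lemma exists_pos_tendsto_prod_range_iff_summable {a : ℕ → ℝ} (ha0 : ∀ k, 0 < a k)
    (ha1 : ∀ k, a k ≤ 1) :
    (∃ L, 0 < L ∧ Tendsto (fun n => ∏ k ∈ Finset.range n, a k) atTop (nhds L)) ↔
      Summable fun k => 1 - a k := by
  constructor
  · rintro ⟨L, hL, hprod⟩
    have hlog : HasSum (fun k => -Real.log (a k)) (-Real.log L) := by
      rw [hasSum_iff_tendsto_nat_of_nonneg fun k =>
        neg_nonneg.2 (Real.log_nonpos (ha0 k).le (ha1 k))]
      refine ((Real.continuousAt_log hL.ne').tendsto.comp hprod).neg.congr fun n => ?_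
      simp [Real.log_prod fun k _ => (ha0 k).ne']
    refine hlog.summable.of_nonneg_of_le (fun k => sub_nonneg.2 (ha1 k)) fun k => ?_
    linarith [Real.log_le_sub_one_of_pos (ha0 k)]
  · intro h
    have hlog : Summable fun k => Real.log (a k) := by
      simpa using Real.summable_log_one_add_of_summable h.neg
    exact ⟨_, Real.exp_pos _, (Real.hasProd_of_hasSum_log ha0 hlog.hasSum).tendsto_prod_nat⟩

lemma summable_tsum_tail_iff {f : ℕ → ℝ} (hf0 : ∀ n, 0 ≤ f n) (hf : Summable f) :
    Summable (fun k : ℕ => ∑' m, f (k + m + 1)) ↔ Summable (fun n : ℕ => (n : ℝ) * f n) := by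
  set g : ℕ × ℕ → ℝ := fun p => f (p.1 + p.2 + 1)
  have hg0 : 0 ≤ g := fun _ => hf0 _
  have hrows : Summable g ↔ Summable (fun k : ℕ => ∑' m, f (k + m + 1)) := by
    refine (summable_prod_of_nonneg hg0).trans (and_iff_right fun k => ?_)
    refine ((summable_nat_add_iff (k + 1)).2 hf).congr fun m => ?_
    simp only [g]; ring_nf
  have hdiag : Summable g ↔ Summable (fun n : ℕ => ((n : ℝ) + 1) * f (n + 1)) := by
    rw [← Finset.HasAntidiagonal.sigmaAntidiagonalEquivProd.summable_iff,
      summable_sigma_of_nonneg (f := g ∘ _) fun _ => hg0 _]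
    refine (and_iff_right fun n => (Set.toFinite _).summable _).trans (summable_congr fun n => ?_)
    calc ∑' p : Finset.HasAntidiagonal.antidiagonal n, g p
        = ∑ p ∈ Finset.HasAntidiagonal.antidiagonal n, f (n + 1) :=
          (Finset.tsum_subtype _ g).trans (Finset.sum_congr rfl fun p hp => by
            rw [← Finset.HasAntidiagonal.mem_antidiagonal.1 hp])
      _ = ((n : ℝ) + 1) * f (n + 1) := by
          rw [Finset.sum_const, Finset.Nat.card_antidiagonal, nsmul_eq_mul]; push_cast; ring
  rw [← hrows, hdiag, ← summable_nat_add_iff 1 (f := fun n : ℕ => (n : ℝ) * f n)]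
  push_cast
  rfl

lemma summable_iff_of_le_mul_of_le_mul {ι : Type*} {b r : ι → ℝ} {c C : ℝ} (hc : 0 < c)
    (hr : ∀ i, 0 ≤ r i) (hlo : ∀ i, c * r i ≤ b i) (hhi : ∀ i, b i ≤ C * r i) :
    Summable b ↔ Summable r := by
  refine ⟨fun hb => (hb.mul_left c⁻¹).of_nonneg_of_le hr fun i => ?_,
    fun hr' => (hr'.mul_left C).of_nonneg_of_le (fun i => ?_) hhi⟩
  · rw [le_inv_mul_iff₀ hc]; exact hlo i
  · exact (mul_nonneg hc.le (hr i)).trans (hlo i)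

section BinaryAutoregression

variable {θ : ℕ → ℝ} {q : ℝ → ℝ}

lemma rTail_nonneg (θ : ℕ → ℝ) (k : ℕ) : 0 ≤ rTail θ k :=
  tsum_nonneg fun _ => abs_nonneg _

lemma rTail_zero_eq (hθ : Summable fun k : ℕ => |θ (k + 1)|) (k : ℕ) :
    rTail θ 0 = ∑ m ∈ Finset.range k, |θ (m + 1)| + rTail θ k := by
  simp only [rTail, zero_add, ← hθ.sum_add_tsum_nat_add k, add_right_comm _ k, add_comm k]

lemma summable_rTail_iff (hθ : Summable fun k : ℕ => |θ (k + 1)|) :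
    Summable (rTail θ) ↔ Summable fun k : ℕ => (k : ℝ) * |θ k| :=
  summable_tsum_tail_iff (f := fun n => |θ n|) (fun _ => abs_nonneg _)
    ((summable_nat_add_iff 1).1 hθ)

lemma abs_sum_mul_sign_add_rTail_le (hθ : Summable fun k : ℕ => |θ (k + 1)|) {k : ℕ}
    {w : Fin k → ℝ} (hw : ∀ i, w i = 1 ∨ w i = -1) :
    |∑ m : Fin k, θ (m.1 + 1) * w m| + rTail θ k ≤ rTail θ 0 := by
  have hsum : |∑ m : Fin k, θ (m.1 + 1) * w m| ≤ ∑ m ∈ Finset.range k, |θ (m + 1)| :=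
    calc |∑ m : Fin k, θ (m.1 + 1) * w m| ≤ ∑ m : Fin k, |θ (m.1 + 1) * w m| :=
          Finset.abs_sum_le_sum_abs _ _
      _ = ∑ m : Fin k, |θ (m.1 + 1)| := by
          refine Finset.sum_congr rfl fun m _ => ?_
          rcases hw m with h | h <;> simp [h]
      _ = ∑ m ∈ Finset.range k, |θ (m + 1)| := Fin.sum_univ_eq_sum_range (fun m => |θ (m + 1)|) k
  linarith [rTail_zero_eq hθ k]

lemma deriv_mem_Icc_Cminus_Cplus (hq : ContDiff ℝ 1 q) {c : ℝ}
    (hc : c ∈ Set.Icc (θ 0 - rTail θ 0) (θ 0 + rTail θ 0)) :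
    deriv q c ∈ Set.Icc (Cminus θ q) (Cplus θ q) := by
  have hK := (isCompact_Icc (a := θ 0 - rTail θ 0) (b := θ 0 + rTail θ 0)).image
    (hq.continuous_deriv le_rfl)
  exact ⟨csInf_le hK.bddBelow (Set.mem_image_of_mem _ hc),
    le_csSup hK.bddAbove (Set.mem_image_of_mem _ hc)⟩

lemma Cminus_mul_sub_le_sub_le_Cplus_mul (hq : ContDiff ℝ 1 q) {a b : ℝ}
    (ha : a ∈ Set.Icc (θ 0 - rTail θ 0) (θ 0 + rTail θ 0))
    (hb : b ∈ Set.Icc (θ 0 - rTail θ 0) (θ 0 + rTail θ 0)) (hab : a ≤ b) :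
    Cminus θ q * (b - a) ≤ q b - q a ∧ q b - q a ≤ Cplus θ q * (b - a) := by
  have hcont := hq.continuous.continuousOn (s := Set.Icc (θ 0 - rTail θ 0) (θ 0 + rTail θ 0))
  have hdiff := (hq.differentiable one_ne_zero).differentiableOn
    (s := interior (Set.Icc (θ 0 - rTail θ 0) (θ 0 + rTail θ 0)))
  have hderiv : ∀ c ∈ interior (Set.Icc (θ 0 - rTail θ 0) (θ 0 + rTail θ 0)),
      deriv q c ∈ Set.Icc (Cminus θ q) (Cplus θ q) :=
    fun c hc => deriv_mem_Icc_Cminus_Cplus hq (interior_subset hc)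
  exact ⟨(convex_Icc _ _).mul_sub_le_image_sub_of_le_deriv hcont hdiff
      (fun c hc => (hderiv c hc).1) a ha b hb hab,
    (convex_Icc _ _).image_sub_le_mul_sub_of_deriv_le hcont hdiff
      (fun c hc => (hderiv c hc).2) a ha b hb hab⟩

lemma q_add_sub_q_sub_bounds (hq_mono : StrictMono q) (hq : ContDiff ℝ 1 q) {x r : ℝ}
    (hr : 0 ≤ r) (hx : |x - θ 0| + r ≤ rTail θ 0) :
    2 * Cminus θ q * r ≤ q (x + r) - q (x - r) ∧ q (x + r) - q (x - r) ≤ 2 * Cplus θ q * r ∧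
      q (x + r) - q (x - r) ≤ q (θ 0 + rTail θ 0) - q (θ 0 - rTail θ 0) := by
  have hx' := abs_le.1 (le_sub_iff_add_le.2 hx)
  have hlo : θ 0 - rTail θ 0 ≤ x - r := by linarith
  have hhi : x + r ≤ θ 0 + rTail θ 0 := by linarith
  obtain ⟨hCm, hCp⟩ := Cminus_mul_sub_le_sub_le_Cplus_mul (q := q) hq
    ⟨hlo, by linarith⟩ ⟨by linarith, hhi⟩ (by linarith : x - r ≤ x + r)
  refine ⟨by linarith, by linarith, ?_⟩
  linarith [hq_mono.monotone hlo, hq_mono.monotone hhi]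

lemma aBin_bounds (hθ : Summable fun k : ℕ => |θ (k + 1)|) (hq_mono : StrictMono q)
    (hq : ContDiff ℝ 1 q) (k : ℕ) :
    2 * Cminus θ q * rTail θ k ≤ 1 - aBin θ q k ∧ 1 - aBin θ q k ≤ 2 * Cplus θ q * rTail θ k ∧
      1 - aBin θ q k ≤ q (θ 0 + rTail θ 0) - q (θ 0 - rTail θ 0) := by
  rw [aBin, sub_sub_cancel]
  set S := {d : ℝ | ∃ w : Fin k → ℝ, (∀ i, w i = 1 ∨ w i = -1) ∧
    d = q (θ 0 + (∑ m : Fin k, θ (m.1 + 1) * w m) + rTail θ k)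
      - q (θ 0 + (∑ m : Fin k, θ (m.1 + 1) * w m) - rTail θ k)}
  have hbounds : ∀ d ∈ S, 2 * Cminus θ q * rTail θ k ≤ d ∧ d ≤ 2 * Cplus θ q * rTail θ k ∧
      d ≤ q (θ 0 + rTail θ 0) - q (θ 0 - rTail θ 0) := by
    rintro _ ⟨w, hw, rfl⟩
    refine q_add_sub_q_sub_bounds hq_mono hq (rTail_nonneg θ k) ?_
    simpa only [add_sub_cancel_left] using abs_sum_mul_sign_add_rTail_le hθ hw
  have hone : (_ : ℝ) ∈ S := ⟨fun _ => 1, fun _ => Or.inl rfl, rfl⟩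
  exact ⟨le_csSup_of_le ⟨_, fun d hd => (hbounds d hd).2.1⟩ hone (hbounds _ hone).1,
    csSup_le ⟨_, hone⟩ fun d hd => (hbounds d hd).2.1,
    csSup_le ⟨_, hone⟩ fun d hd => (hbounds d hd).2.2⟩

end BinaryAutoregression

/-- if `C⁻ > 0`, the following are equivalent:
(i) `β = ∏_{k=0}^∞ a_k > 0` (the partial products converge to a positive limit);
(ii) `∑_k r_k < ∞`; (iii) `∑_k k |θ_k| < ∞`. -/
theorem stmt17 (θ : ℕ → ℝ) (hθ : Summable fun k : ℕ => |θ (k + 1)|)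
    (q : ℝ → ℝ) (hq_mono : StrictMono q) (hq01 : ∀ x, q x ∈ Set.Ioo (0:ℝ) 1)
    (hq_diff : ContDiff ℝ 1 q) (hCm : 0 < Cminus θ q) :
    ((∃ L : ℝ, 0 < L ∧
        Tendsto (fun n : ℕ => ∏ k ∈ Finset.range n, aBin θ q k) atTop (nhds L)) ↔
      Summable (fun k : ℕ => rTail θ k)) ∧
    (Summable (fun k : ℕ => rTail θ k) ↔
      Summable (fun k : ℕ => (k : ℝ) * |θ k|)) := by
  have hB := aBin_bounds hθ hq_mono hq_diff
  have ha0 (k : ℕ) : 0 < aBin θ q k := by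
    linarith [(hB k).2.2, (hq01 (θ 0 + rTail θ 0)).2, (hq01 (θ 0 - rTail θ 0)).1]
  have ha1 (k : ℕ) : aBin θ q k ≤ 1 := by
    linarith [(hB k).1, mul_nonneg (by linarith : 0 ≤ 2 * Cminus θ q) (rTail_nonneg θ k)]
  rw [exists_pos_tendsto_prod_range_iff_summable ha0 ha1]
  exact ⟨summable_iff_of_le_mul_of_le_mul (by linarith) (rTail_nonneg θ) (fun k => (hB k).1)
      (fun k => (hB k).2.1),
    summable_rTail_iff hθ⟩
end
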